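/- arXiv:1610.09269 — 7 statements merged into one kernel-verified Lean document; each statement's English description precedes it below -/
import Mathlib

section
/- Let F be a laminar family on a finite set V containing V and all singletons, and define d_F : V × V → ℝ by d_F(i,j) := |C_F(i,j)| − 1 for i ≠ j and d_F(i,i) := 0. Then d_F is a non-trivial ultrametric on V. -/
/-- An ultrametric on a set `X`: nonnegative, vanishing exactly on the diagonal,
symmetric, and satisfying the strong triangle inequality. -/
def IsUltrametric {X : Type*} (d : X → X → ℝ) : Prop :=
  (∀ x y, 0 ≤ d x y) ∧ (∀ x y, d x y = 0 ↔ x = y) ∧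
  (∀ x y, d x y = d y x) ∧ (∀ x y z, d x y ≤ max (d y z) (d z x))

/-- A non-trivial ultrametric on a finite set `V`. -/
def IsNontrivialUltrametric {V : Type*} [Fintype V] [DecidableEq V] (d : V → V → ℝ) : Prop :=
  IsUltrametric d ∧
  (∀ S : Finset V, S.Nonempty → ∃ i ∈ S, ∃ j ∈ S, (S.card : ℝ) - 1 ≤ d i j) ∧
  (∀ t : ℝ, ∀ S : Finset V, S.Nonempty →
    (∀ i ∈ S, ∀ j : V, j ∈ S ↔ d i j ≤ t) →
    ∀ i ∈ S, ∀ j ∈ S, d i j ≤ (S.card : ℝ) - 1)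

/-- Let `F` be a laminar family on a finite set `V` containing `V` and all singletons,
and for `i ≠ j` let `C i j` be the smallest member of `F` containing both `i` and `j`.
Then `d` defined by `d i j = |C i j| - 1` for `i ≠ j` and `d i i = 0` is a
non-trivial ultrametric on `V`. -/
theorem statement3 {V : Type*} [Fintype V] [DecidableEq V]
    (F : Finset (Finset V))
    (hlam : ∀ A ∈ F, ∀ B ∈ F, A ∩ B = ∅ ∨ A ⊆ B ∨ B ⊆ A)
    (huniv : (Finset.univ : Finset V) ∈ F)
    (hsing : ∀ i : V, {i} ∈ F)
    (C : V → V → Finset V)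
    (hC : ∀ i j : V, i ≠ j → C i j ∈ F ∧ i ∈ C i j ∧ j ∈ C i j ∧
      ∀ D ∈ F, i ∈ D → j ∈ D → C i j ⊆ D)
    (d : V → V → ℝ)
    (hd : ∀ i j : V, d i j = if i = j then 0 else ((C i j).card : ℝ) - 1) :
    IsNontrivialUltrametric d := by
  have hcard2 : ∀ i j : V, i ≠ j → 2 ≤ (C i j).card := fun i j hij =>
    Finset.one_lt_card.2 ⟨i, (hC i j hij).2.1, j, (hC i j hij).2.2.1, hij⟩
  have hdnn : ∀ x y, 0 ≤ d x y := by
    intro x y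
    rw [hd]
    split_ifs with h
    · exact le_refl 0
    · have h2 : (2:ℝ) ≤ ((C x y).card : ℝ) := by exact_mod_cast hcard2 x y h
      linarith
  have hdeq : ∀ x y, d x y = 0 ↔ x = y := by
    intro x y
    constructor
    · intro h0
      by_contra h
      rw [hd, if_neg h] at h0
      have h2 : (2:ℝ) ≤ ((C x y).card : ℝ) := by exact_mod_cast hcard2 x y h
      linarith
    · intro h; subst h; rw [hd, if_pos rfl]
  have hsymC : ∀ i j, i ≠ j → C i j = C j i := by
    intro i j hij
    obtain ⟨hF, hi, hj, hmin⟩ := hC i j hij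
    obtain ⟨hF', hj', hi', hmin'⟩ := hC j i hij.symm
    exact Finset.Subset.antisymm (hmin _ hF' hi' hj') (hmin' _ hF hj hi)
  have hdsym : ∀ x y, d x y = d y x := by
    intro x y
    by_cases h : x = y
    · subst h; rfl
    · rw [hd, hd, if_neg h, if_neg (Ne.symm h), hsymC x y h]
  have htri : ∀ x y z, d x y ≤ max (d y z) (d z x) := by
    intro x y z
    by_cases hxy : x = y
    · subst hxy
      rw [hd x x, if_pos rfl]
      exact le_trans (hdnn x z) (le_max_left _ _)
    by_cases hyz : y = z
    · subst hyz
      rw [hdsym x y]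
      exact le_max_of_le_right (le_refl _)
    by_cases hzx : z = x
    · subst hzx
      rw [hdsym z y]
      exact le_max_of_le_left (le_refl _)
    obtain ⟨hFyz, hy1, hz1, hmin1⟩ := hC y z hyz
    obtain ⟨hFzx, hz2, hx2, hmin2⟩ := hC z x hzx
    rcases hlam _ hFyz _ hFzx with hdisj | hsub | hsub
    · exfalso
      have hz3 : z ∈ C y z ∩ C z x := Finset.mem_inter.2 ⟨hz1, hz2⟩
      rw [hdisj] at hz3
      exact Finset.notMem_empty z hz3
    · have hsubxy : C x y ⊆ C z x := (hC x y hxy).2.2.2 _ hFzx hx2 (hsub hy1)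
      have hcle : ((C x y).card : ℝ) ≤ ((C z x).card : ℝ) := by
        exact_mod_cast Finset.card_le_card hsubxy
      rw [hd x y, if_neg hxy, hd z x, if_neg hzx]
      exact le_max_of_le_right (by linarith)
    · have hsubxy : C x y ⊆ C y z := (hC x y hxy).2.2.2 _ hFyz (hsub hx2) hy1
      have hcle : ((C x y).card : ℝ) ≤ ((C y z).card : ℝ) := by
        exact_mod_cast Finset.card_le_card hsubxy
      rw [hd x y, if_neg hxy, hd y z, if_neg hyz]
      exact le_max_of_le_left (by linarith)
  refine ⟨⟨hdnn, hdeq, hdsym, htri⟩, ?_, ?_⟩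
  · intro S hS
    by_cases h1 : S.card ≤ 1
    · obtain ⟨i, hi⟩ := hS
      refine ⟨i, hi, i, hi, ?_⟩
      rw [hd, if_pos rfl]
      have : (S.card : ℝ) ≤ 1 := by exact_mod_cast h1
      linarith
    · push_neg at h1
      obtain ⟨a, ha, b, hb, hab⟩ := Finset.one_lt_card.1 h1
      set P := (S ×ˢ S).filter (fun p => p.1 ≠ p.2) with hP
      have hPne : P.Nonempty :=
        ⟨(a, b), Finset.mem_filter.2 ⟨Finset.mem_product.2 ⟨ha, hb⟩, hab⟩⟩
      obtain ⟨p, hpP, hpmax⟩ := P.exists_max_image (fun p => (C p.1 p.2).card) hPne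
      obtain ⟨hpmem, hpne⟩ := Finset.mem_filter.1 hpP
      obtain ⟨hp1, hp2⟩ := Finset.mem_product.1 hpmem
      refine ⟨p.1, hp1, p.2, hp2, ?_⟩
      have hSsub : S ⊆ C p.1 p.2 := by
        intro k hk
        by_contra hkC
        have hk1 : k ≠ p.1 := fun h => hkC (h ▸ (hC p.1 p.2 hpne).2.1)
        obtain ⟨hFk, h1k, hkk, hmink⟩ := hC p.1 k (Ne.symm hk1)
        obtain ⟨hF0, h10, h20, hmin0⟩ := hC p.1 p.2 hpne
        rcases hlam _ hFk _ hF0 with hdisj | hsub | hsub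
        · have : p.1 ∈ C p.1 k ∩ C p.1 p.2 := Finset.mem_inter.2 ⟨h1k, h10⟩
          rw [hdisj] at this
          exact Finset.notMem_empty _ this
        · exact hkC (hsub hkk)
        · have hle : (C p.1 k).card ≤ (C p.1 p.2).card :=
            hpmax (p.1, k)
              (Finset.mem_filter.2 ⟨Finset.mem_product.2 ⟨hp1, hk⟩, Ne.symm hk1⟩)
          have heq := Finset.eq_of_subset_of_card_le hsub hle
          exact hkC (heq ▸ hkk)
      have hcle : (S.card : ℝ) ≤ ((C p.1 p.2).card : ℝ) := by
        exact_mod_cast Finset.card_le_card hSsub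
      rw [hd, if_neg hpne]
      linarith
  · intro t S hS hprop i hi j hj
    by_cases hij : i = j
    · subst hij
      rw [hd, if_pos rfl]
      have h1 : 1 ≤ S.card := Finset.card_pos.2 hS
      have : (1:ℝ) ≤ (S.card : ℝ) := by exact_mod_cast h1
      linarith
    · obtain ⟨hF0, h10, h20, hmin0⟩ := hC i j hij
      have hsub : C i j ⊆ S := by
        intro k hk
        by_cases hik : i = k
        · exact hik ▸ hi
        · have hCk : C i k ⊆ C i j := (hC i k hik).2.2.2 _ hF0 h10 hk
          have hdik : d i k ≤ d i j := by
            rw [hd i k, if_neg hik, hd i j, if_neg hij]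
            have : ((C i k).card : ℝ) ≤ ((C i j).card : ℝ) := by
              exact_mod_cast Finset.card_le_card hCk
            linarith
          have hdij : d i j ≤ t := (hprop i hi j).1 hj
          exact (hprop i hi k).2 (le_trans hdik hdij)
      have hcle : ((C i j).card : ℝ) ≤ (S.card : ℝ) := by
        exact_mod_cast Finset.card_le_card hsub
      rw [hd, if_neg hij]
      linarith
end

section
/- Let d be a non-trivial ultrametric on a finite set V. Then there exists a laminar family F on V containing V and all singletons such that d = d_F; that is, for every pair i ≠ j in V, d(i,j) = |C_F(i,j)| − 1, where C_F(i,j) is the smallest member of F containing both i and j. -/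
/-- Every non-trivial ultrametric `d` on a finite set `V` is realized by a laminar
family `F` on `V` containing `V` and all singletons: for every `i ≠ j`, if `C` is the
smallest member of `F` containing both `i` and `j`, then `d i j = |C| - 1`. -/
theorem statement4 {V : Type*} [Fintype V] [DecidableEq V]
    (d : V → V → ℝ) (hd : IsNontrivialUltrametric d) :
    ∃ F : Finset (Finset V),
      (∀ A ∈ F, ∀ B ∈ F, A ∩ B = ∅ ∨ A ⊆ B ∨ B ⊆ A) ∧
      (Finset.univ : Finset V) ∈ F ∧ (∀ i : V, {i} ∈ F) ∧
      ∀ i j : V, i ≠ j → ∃ C ∈ F, i ∈ C ∧ j ∈ C ∧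
        (∀ D ∈ F, i ∈ D → j ∈ D → C ⊆ D) ∧ d i j = (C.card : ℝ) - 1 := by
  classical
  obtain ⟨⟨hnn, hzero, hsymm, hult⟩, hlow, hup⟩ := hd
  set ball : V → ℝ → Finset V := fun x r => Finset.univ.filter (fun b => d x b ≤ r) with hball
  have mem_ball : ∀ x r b, b ∈ ball x r ↔ d x b ≤ r := by
    intro x r b; simp [hball]
  have tri : ∀ x y z, d x y ≤ max (d x z) (d z y) := by
    intro x y z
    have h := hult x y z
    rw [hsymm y z, hsymm z x] at h
    exact h.trans (le_of_eq (max_comm _ _))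
  -- nesting lemma
  have nested : ∀ x r y s z, d x z ≤ r → d y z ≤ s → r ≤ s → ball x r ⊆ ball y s := by
    intro x r y s z hxz hyz hrs a ha
    rw [mem_ball] at ha ⊢
    have h1 : d z a ≤ max (d z x) (d x a) := tri z a x
    have h2 : d z x ≤ r := by rw [hsymm]; exact hxz
    have h3 : d z a ≤ r := h1.trans (max_le h2 ha)
    have h4 : d y a ≤ max (d y z) (d z a) := tri y a z
    exact h4.trans (max_le (hyz.trans le_rfl) (h3.trans hrs))
  refine ⟨insert Finset.univ ((Finset.univ : Finset (V × V)).image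
      (fun p => ball p.1 (d p.1 p.2))), ?_, ?_, ?_, ?_⟩
  · -- laminar
    intro A hA B hB
    rcases Finset.mem_insert.1 hB with hB | hB
    · subst hB; exact Or.inr (Or.inl (Finset.subset_univ _))
    rcases Finset.mem_insert.1 hA with hA | hA
    · subst hA; exact Or.inr (Or.inr (Finset.subset_univ _))
    obtain ⟨p, -, hp⟩ := Finset.mem_image.1 hA
    obtain ⟨q, -, hq⟩ := Finset.mem_image.1 hB
    subst hp; subst hq
    by_cases hint : ball p.1 (d p.1 p.2) ∩ ball q.1 (d q.1 q.2) = ∅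
    · exact Or.inl hint
    · obtain ⟨z, hz⟩ := Finset.nonempty_iff_ne_empty.2 hint
      rw [Finset.mem_inter] at hz
      have hz1 := (mem_ball _ _ _).1 hz.1
      have hz2 := (mem_ball _ _ _).1 hz.2
      rcases le_total (d p.1 p.2) (d q.1 q.2) with h | h
      · exact Or.inr (Or.inl (nested _ _ _ _ z hz1 hz2 h))
      · exact Or.inr (Or.inr (nested _ _ _ _ z hz2 hz1 h))
  · exact Finset.mem_insert_self _ _
  · -- singletons
    intro i
    refine Finset.mem_insert_of_mem (Finset.mem_image.2 ⟨(i, i), Finset.mem_univ _, ?_⟩)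
    ext b
    rw [mem_ball]
    simp only [Finset.mem_singleton]
    constructor
    · intro hb
      have h0 : d i i = 0 := (hzero i i).2 rfl
      have : d i b ≤ 0 := by rw [h0] at hb; exact hb
      have : d i b = 0 := le_antisymm this (hnn i b)
      exact ((hzero i b).1 this).symm
    · rintro rfl
      exact le_rfl
  · intro i j hij
    set t := d i j with ht
    set S := ball i t with hS
    have hiS : i ∈ S := by rw [hS, mem_ball]; exact le_of_eq ((hzero i i).2 rfl) |>.trans (hnn i j)
    have hjS : j ∈ S := by rw [hS, mem_ball]
    -- S is an equivalence class at level t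
    have hclass : ∀ a ∈ S, ∀ b : V, b ∈ S ↔ d a b ≤ t := by
      intro a ha b
      rw [hS, mem_ball] at ha ⊢
      constructor
      · intro hb
        have h1 : d a b ≤ max (d a i) (d i b) := tri a b i
        exact h1.trans (max_le (by rw [hsymm]; exact ha) hb)
      · intro hb
        have h1 : d i b ≤ max (d i a) (d a b) := tri i b a
        exact h1.trans (max_le ha hb)
    have hub : d i j ≤ (S.card : ℝ) - 1 := hup t S ⟨i, hiS⟩ hclass i hiS j hjS
    have hlb : (S.card : ℝ) - 1 ≤ d i j := by
      obtain ⟨a, ha, b, hb, hab⟩ := hlow S ⟨i, hiS⟩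
      exact hab.trans ((hclass a ha b).1 hb)
    refine ⟨S, ?_, hiS, hjS, ?_, le_antisymm hub hlb⟩
    · exact Finset.mem_insert_of_mem (Finset.mem_image.2 ⟨(i, j), Finset.mem_univ _, rfl⟩)
    · intro D hD hiD hjD
      rcases Finset.mem_insert.1 hD with hD | hD
      · subst hD; exact Finset.subset_univ _
      obtain ⟨q, -, hq⟩ := Finset.mem_image.1 hD
      subst hq
      rw [mem_ball] at hiD hjD
      have hij_le : d i j ≤ d q.1 q.2 := by
        have h1 : d i j ≤ max (d i q.1) (d q.1 j) := tri i j q.1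
        exact h1.trans (max_le (by rw [hsymm]; exact hiD) hjD)
      exact nested i t q.1 (d q.1 q.2) i
        ((le_of_eq ((hzero i i).2 rfl)).trans (hnn i j)) hiD hij_le
end

section
/- Fix a finite set V with |V| = n and t ∈ {1, …, n−1}. If x : V × V → {0,1} is feasible for the layer-t problem, then the relation i ∼ j iff x(i,j) = 0 is an equivalence relation on V, each of whose equivalence classes has size at most t. Conversely, given any partition of V into blocks each of size at most t, the function x defined by x(i,j) = 0 if i and j lie in the same block and x(i,j) = 1 otherwise, is feasible for the layer-t problem. (Equivalently, feasible solutions of the layer-t problem correspond exactly to graphs on V that are disjoint unions of cliques of size at most t.) -/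
open scoped Classical

/-- `x : V × V → {0,1}` is feasible for the layer-`t` problem: symmetric, zero on the
diagonal, satisfying the (strong) triangle constraints `x i k ≤ x i j + x j k`, and the
spreading constraints `Σ_{i,j ∈ S} x i j ≥ 2` for every `S ⊆ V` with `|S| = t + 1`. -/
def LayerFeasible {V : Type*} [Fintype V] [DecidableEq V] (t : ℕ) (x : V → V → ℝ) : Prop :=
  (∀ i j : V, x i j = x j i) ∧ (∀ i : V, x i i = 0) ∧
  (∀ i j k : V, x i k ≤ x i j + x j k) ∧
  (∀ S : Finset V, S.card = t + 1 → (2 : ℝ) ≤ ∑ i ∈ S, ∑ j ∈ S, x i j)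

/-- Feasible 0/1 solutions of the layer-`t` problem correspond exactly to partitions of
`V` into blocks of size at most `t`: if `x` is feasible then `i ∼ j ↔ x i j = 0` is an
equivalence relation all of whose classes have size at most `t`; conversely, the 0/1
function induced by any equivalence relation with classes of size at most `t` is
feasible for the layer-`t` problem. -/
theorem statement5 {V : Type*} [Fintype V] [DecidableEq V] (n t : ℕ)
    (hn : Fintype.card V = n) (ht1 : 1 ≤ t) (ht2 : t ≤ n - 1) :
    (∀ x : V → V → ℝ, (∀ i j : V, x i j = 0 ∨ x i j = 1) → LayerFeasible t x →
      Equivalence (fun i j : V => x i j = 0) ∧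
      ∀ i : V, (Finset.univ.filter fun j : V => x i j = 0).card ≤ t) ∧
    (∀ r : V → V → Prop, Equivalence r →
      (∀ i : V, (Finset.univ.filter fun j : V => r i j).card ≤ t) →
      LayerFeasible t (fun i j : V => if r i j then 0 else 1)) := by
  constructor
  · rintro x h01 ⟨hsym, hdiag, htri, hspread⟩
    have hnonneg : ∀ i j, (0 : ℝ) ≤ x i j := by
      intro i j; rcases h01 i j with h | h <;> simp [h]
    have htrans : ∀ {i j k : V}, x i j = 0 → x j k = 0 → x i k = 0 := by
      intro i j k hij hjk
      have := htri i j k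
      rw [hij, hjk] at this
      linarith [hnonneg i k]
    have hequiv : Equivalence (fun i j : V => x i j = 0) :=
      ⟨fun i => hdiag i, fun {i j} h => by rw [hsym] at h; exact h,
        fun {i j k} h1 h2 => htrans h1 h2⟩
    refine ⟨hequiv, ?_⟩
    intro i
    by_contra hc
    push_neg at hc
    obtain ⟨S, hS, hScard⟩ := Finset.exists_subset_card_eq hc
    have hall : ∀ a ∈ S, ∀ b ∈ S, x a b = 0 := by
      intro a ha b hb
      have ha' := (Finset.mem_filter.mp (hS ha)).2
      have hb' := (Finset.mem_filter.mp (hS hb)).2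
      exact htrans (hequiv.symm ha') hb'
    have := hspread S hScard
    rw [Finset.sum_congr rfl (fun a ha => Finset.sum_congr rfl (fun b hb => hall a ha b hb))] at this
    simp at this
    linarith
  · rintro r ⟨hrefl, hsymm, htrans⟩ hcard
    refine ⟨?_, ?_, ?_, ?_⟩
    · intro i j
      by_cases h : r i j
      · simp [h, hsymm h]
      · have h' : ¬ r j i := fun hr => h (hsymm hr)
        simp [h, h']
    · intro i; simp [hrefl i]
    · intro i j k
      by_cases hik : r i k
      · by_cases hij : r i j <;> by_cases hjk : r j k <;> simp [hik, hij, hjk] <;> norm_num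
      · have : ¬ (r i j ∧ r j k) := fun ⟨h1, h2⟩ => hik (htrans h1 h2)
        by_cases hij : r i j
        · have hjk : ¬ r j k := fun h => this ⟨hij, h⟩
          simp [hik, hij, hjk]
        · by_cases hjk : r j k <;> simp [hik, hij, hjk] <;> norm_num
    · intro S hS
      have hnonneg : ∀ i j : V, (0 : ℝ) ≤ if r i j then 0 else 1 := by
        intro i j; split <;> norm_num
      -- find a b in S with ¬ r a b
      have hne : S.Nonempty := by rw [← Finset.card_pos, hS]; omega
      obtain ⟨a, ha⟩ := hne
      have : ¬ ∀ b ∈ S, r a b := by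
        intro hall
        have hsub : S ⊆ Finset.univ.filter fun j => r a j := by
          intro b hb; simp [hall b hb]
        have := Finset.card_le_card hsub
        rw [hS] at this
        have := hcard a
        omega
      push_neg at this
      obtain ⟨b, hb, hrab⟩ := this
      have hab : a ≠ b := fun h => hrab (h ▸ hrefl a)
      have f1 : (1 : ℝ) ≤ ∑ j ∈ S, if r a j then (0:ℝ) else 1 := by
        calc (1:ℝ) = if r a b then 0 else 1 := by simp [hrab]
        _ ≤ _ := Finset.single_le_sum (fun j _ => hnonneg a j) hb
      have hrba : ¬ r b a := fun h => hrab (hsymm h)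
      have f2 : (1 : ℝ) ≤ ∑ j ∈ S, if r b j then (0:ℝ) else 1 := by
        calc (1:ℝ) = if r b a then 0 else 1 := by simp [hrba]
        _ ≤ _ := Finset.single_le_sum (fun j _ => hnonneg b j) ha
      have key : ∑ i ∈ S, ∑ j ∈ S, (if r i j then (0:ℝ) else 1) ≥
          (∑ j ∈ S, if r a j then (0:ℝ) else 1) + (∑ j ∈ S, if r b j then (0:ℝ) else 1) := by
        rw [← Finset.sum_pair hab (f := fun i => ∑ j ∈ S, if r i j then (0:ℝ) else 1)]
        refine Finset.sum_le_sum_of_subset_of_nonneg ?_ ?_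
        · intro c hc
          rcases Finset.mem_insert.mp hc with h | h
          · exact h ▸ ha
          · exact (Finset.mem_singleton.mp h) ▸ hb
        · intro i hi _
          exact Finset.sum_nonneg fun j _ => hnonneg i j
      linarith
end

section
/- Let V be a finite set with |V| = n and, for every t ∈ {1, …, n−1}, let x^t : V × V → {0,1} be feasible for the layer-t problem; let 𝒫_t denote the partition of V into equivalence classes of the relation i ∼ j iff x^t(i,j) = 0 (each class has size at most t). Then the family (x^t)_{t=1}^{n−1} is feasible for ILP-ultrametric if and only if both of the following hold: (Nested cliques) for all s ≤ t, every class of 𝒫_s is contained in some class of 𝒫_t; and (Realization) for every t and every class P of 𝒫_t with |P| = s ≤ t, P is itself a class of 𝒫_s. -/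
open scoped Classical

/-!
Each feasible 0/1 layer `x^t` is a pseudometric, so `x^t i j = 0` is an equivalence relation,
and the constraints on `(t + 1)`-sets bound its classes by `t`. For 0/1 values the bracket of
the hereditary constraint for `S` equals `∑_{a ∈ S} |S ∆ [a]_t|`, the number of disagreements
between `S` and the classes of its elements: it vanishes when `S` is a class of `𝒫_t` and is at
least `|S|` otherwise. So the hereditary constraint is automatic unless `S` is a class of `𝒫_t`,
and then it says that `x^{|S|}` vanishes on `S × S`, i.e. (given nesting) that `S` is a class of
`𝒫_{|S|}`. The layer constraints say, for 0/1 values, exactly that the classes are nested.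
-/

open Finset
open scoped symmDiff

structure IsPseudometric {V : Type*} (x : V → V → ℝ) : Prop where
  symm : ∀ i j, x i j = x j i
  self : ∀ i, x i i = 0
  triangle : ∀ i j k, x i k ≤ x i j + x j k

lemma LayerFeasible.isPseudometric {V : Type*} [Fintype V] [DecidableEq V] {t : ℕ}
    {x : V → V → ℝ} (h : LayerFeasible t x) : IsPseudometric x :=
  ⟨h.1, h.2.1, h.2.2.1⟩

lemma IsPseudometric.nonneg {V : Type*} {x : V → V → ℝ} (hx : IsPseudometric x) (i j : V) :
    0 ≤ x i j := by
  linarith [hx.self i, hx.triangle i j i, hx.symm i j]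

lemma sum_sum_le_card_mul_card {V : Type*} {x : V → V → ℝ} (hx : ∀ i j, x i j ≤ 1)
    (S : Finset V) : ∑ a ∈ S, ∑ b ∈ S, x a b ≤ #S * #S :=
  calc ∑ a ∈ S, ∑ b ∈ S, x a b ≤ ∑ a ∈ S, ∑ b ∈ S, (1 : ℝ) :=
        sum_le_sum fun a _ => sum_le_sum fun b _ => hx a b
    _ = #S * #S := by simp

section ZeroClass

variable {V : Type*} [Fintype V] {x : V → V → ℝ}

noncomputable def zeroClass (x : V → V → ℝ) (i : V) : Finset V := {j | x i j = 0}

@[simp] lemma mem_zeroClass {i j : V} : j ∈ zeroClass x i ↔ x i j = 0 := by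
  simp [zeroClass]

namespace IsPseudometric

lemma mem_zeroClass_self (hx : IsPseudometric x) (i : V) : i ∈ zeroClass x i := by
  simp [hx.self i]

lemma eq_zero_of_mem_zeroClass (hx : IsPseudometric x) {i a b : V} (ha : a ∈ zeroClass x i)
    (hb : b ∈ zeroClass x i) : x a b = 0 := by
  rw [mem_zeroClass] at ha hb
  linarith [hx.triangle a i b, hx.symm a i, hx.nonneg a b]

lemma zeroClass_eq_of_mem (hx : IsPseudometric x) {i a : V} (ha : a ∈ zeroClass x i) :
    zeroClass x a = zeroClass x i := by
  ext b
  refine ⟨fun hb => ?_, fun hb => mem_zeroClass.2 (hx.eq_zero_of_mem_zeroClass ha hb)⟩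
  rw [mem_zeroClass] at ha hb ⊢
  linarith [hx.triangle i a b, hx.nonneg i b]

lemma sum_sum_eq_zero_of_subset_zeroClass (hx : IsPseudometric x) {S : Finset V} {i : V}
    (hS : S ⊆ zeroClass x i) : ∑ a ∈ S, ∑ b ∈ S, x a b = 0 :=
  sum_eq_zero fun _ ha => sum_eq_zero fun _ hb => hx.eq_zero_of_mem_zeroClass (hS ha) (hS hb)

lemma subset_zeroClass_of_sum_sum_nonpos (hx : IsPseudometric x) {S : Finset V}
    (h : ∑ a ∈ S, ∑ b ∈ S, x a b ≤ 0) {a : V} (ha : a ∈ S) : S ⊆ zeroClass x a := by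
  have hrow := (sum_eq_zero_iff_of_nonneg fun a _ => sum_nonneg fun b _ => hx.nonneg a b).1
    (h.antisymm (sum_nonneg fun a _ => sum_nonneg fun b _ => hx.nonneg a b)) a ha
  exact fun b hb => mem_zeroClass.2 <|
    (sum_eq_zero_iff_of_nonneg fun b _ => hx.nonneg a b).1 hrow b hb

end IsPseudometric

lemma LayerFeasible.card_zeroClass_le [DecidableEq V] {t : ℕ} (h : LayerFeasible t x) (i : V) :
    #(zeroClass x i) ≤ t := by
  by_contra! hcard
  obtain ⟨T, hT, hTcard⟩ := exists_subset_card_eq (s := zeroClass x i) (n := t + 1) hcard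
  have := h.2.2.2 T hTcard
  rw [h.isPseudometric.sum_sum_eq_zero_of_subset_zeroClass hT] at this
  norm_num at this

variable [DecidableEq V]

lemma sum_eq_card_sdiff_zeroClass (hbin : ∀ i j, x i j = 0 ∨ x i j = 1) (S : Finset V) (a : V) :
    ∑ b ∈ S, x a b = #(S \ zeroClass x a) := by
  rw [show S \ zeroClass x a = S.filter (x a · ≠ 0) by ext; simp, card_filter, Nat.cast_sum]
  refine sum_congr rfl fun b _ => ?_
  rcases hbin a b with h | h <;> simp [h]

lemma sum_compl_one_sub_eq_card_zeroClass_sdiff (hbin : ∀ i j, x i j = 0 ∨ x i j = 1)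
    (S : Finset V) (a : V) : ∑ b ∈ Sᶜ, (1 - x a b) = #(zeroClass x a \ S) := by
  rw [show zeroClass x a \ S = Sᶜ.filter (x a · = 0) by ext; simp [and_comm], card_filter,
    Nat.cast_sum]
  refine sum_congr rfl fun b _ => ?_
  rcases hbin a b with h | h <;> simp [h]

lemma sum_add_sum_compl_eq_card_symmDiff (hbin : ∀ i j, x i j = 0 ∨ x i j = 1)
    (S : Finset V) (a : V) :
    ∑ b ∈ S, x a b + ∑ b ∈ Sᶜ, (1 - x a b) = #(S ∆ zeroClass x a) := by
  rw [sum_eq_card_sdiff_zeroClass hbin, sum_compl_one_sub_eq_card_zeroClass_sdiff hbin,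
    Finset.symmDiff_def, card_union_of_disjoint disjoint_sdiff_sdiff, Nat.cast_add]

lemma sum_sum_add_sum_sum_compl_eq_sum_card_symmDiff (hbin : ∀ i j, x i j = 0 ∨ x i j = 1)
    (S : Finset V) :
    ∑ a ∈ S, ∑ b ∈ S, x a b + ∑ a ∈ S, ∑ b ∈ Sᶜ, (1 - x a b) =
      ∑ a ∈ S, (#(S ∆ zeroClass x a) : ℝ) := by
  rw [← sum_add_distrib]
  exact sum_congr rfl fun a _ => sum_add_sum_compl_eq_card_symmDiff hbin S a

lemma IsPseudometric.sum_sum_add_sum_sum_compl_zeroClass_eq_zero (hx : IsPseudometric x)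
    (hbin : ∀ i j, x i j = 0 ∨ x i j = 1) (i : V) :
    ∑ a ∈ zeroClass x i, ∑ b ∈ zeroClass x i, x a b +
      ∑ a ∈ zeroClass x i, ∑ b ∈ (zeroClass x i)ᶜ, (1 - x a b) = 0 := by
  rw [sum_sum_add_sum_sum_compl_eq_sum_card_symmDiff hbin]
  exact sum_eq_zero fun a ha => by simp [hx.zeroClass_eq_of_mem ha]

lemma card_le_sum_sum_add_sum_sum_compl (hbin : ∀ i j, x i j = 0 ∨ x i j = 1) {S : Finset V}
    (hS : ∀ a ∈ S, S ≠ zeroClass x a) :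
    (#S : ℝ) ≤ ∑ a ∈ S, ∑ b ∈ S, x a b + ∑ a ∈ S, ∑ b ∈ Sᶜ, (1 - x a b) := by
  rw [sum_sum_add_sum_sum_compl_eq_sum_card_symmDiff hbin, card_eq_sum_ones, Nat.cast_sum]
  exact sum_le_sum fun a ha => by exact_mod_cast card_pos.2 (symmDiff_nonempty.2 (hS a ha))

end ZeroClass

def LayerConstraints {V : Type*} (n : ℕ) (x : ℕ → V → V → ℝ) : Prop :=
  ∀ t ∈ Icc 1 (n - 2), ∀ i j : V, x (t + 1) i j ≤ x t i j

section Family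

variable {V : Type*} [Fintype V]

def HereditaryConstraints [DecidableEq V] (n : ℕ) (x : ℕ → V → V → ℝ) : Prop :=
  ∀ t ∈ Icc 1 (n - 1), ∀ S : Finset V, #S ≤ n - 1 →
    ∑ i ∈ S, ∑ j ∈ S, x #S i j ≤
      #S * (∑ i ∈ S, ∑ j ∈ S, x t i j + ∑ i ∈ S, ∑ j ∈ Sᶜ, (1 - x t i j))

def NestedCliques (n : ℕ) (x : ℕ → V → V → ℝ) : Prop :=
  ∀ s ∈ Icc 1 (n - 1), ∀ t ∈ Icc 1 (n - 1), s ≤ t →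
    ∀ i : V, zeroClass (x s) i ⊆ zeroClass (x t) i

def Realization (n : ℕ) (x : ℕ → V → V → ℝ) : Prop :=
  ∀ t ∈ Icc 1 (n - 1), ∀ i : V, zeroClass (x #(zeroClass (x t) i)) i = zeroClass (x t) i

variable {n : ℕ} {x : ℕ → V → V → ℝ}

lemma LayerConstraints.nestedCliques [DecidableEq V]
    (hfeas : ∀ t ∈ Icc 1 (n - 1), LayerFeasible t (x t)) (hlay : LayerConstraints n x) :
    NestedCliques n x := by
  have hanti : AntitoneOn x (Set.Icc 1 (n - 1)) :=
    antitoneOn_of_add_one_le Set.ordConnected_Icc fun t _ ht ht' =>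
      fun i j => hlay t (mem_Icc.2 ⟨ht.1, by have := ht'.2; omega⟩) i j
  intro s hs t ht hst i j hj
  rw [mem_zeroClass] at hj ⊢
  exact (hj ▸ hanti (mem_Icc.1 hs) (mem_Icc.1 ht) hst i j).antisymm
    ((hfeas t ht).isPseudometric.nonneg i j)

lemma NestedCliques.layerConstraints
    (hbin : ∀ t ∈ Icc 1 (n - 1), ∀ i j : V, x t i j = 0 ∨ x t i j = 1)
    (hnest : NestedCliques n x) : LayerConstraints n x := by
  intro t ht i j
  have ht' := mem_Icc.1 ht
  have hlow : t ∈ Icc 1 (n - 1) := mem_Icc.2 ⟨ht'.1, by omega⟩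
  have hup : t + 1 ∈ Icc 1 (n - 1) := mem_Icc.2 ⟨by omega, by omega⟩
  rcases hbin t hlow i j with h | h
  · have := hnest t hlow (t + 1) hup t.le_succ i (mem_zeroClass.2 h)
    rw [mem_zeroClass.1 this, h]
  · rcases hbin (t + 1) hup i j with h' | h' <;> norm_num [h, h']

lemma HereditaryConstraints.realization [DecidableEq V]
    (hbin : ∀ t ∈ Icc 1 (n - 1), ∀ i j : V, x t i j = 0 ∨ x t i j = 1)
    (hfeas : ∀ t ∈ Icc 1 (n - 1), LayerFeasible t (x t)) (hnest : NestedCliques n x)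
    (hher : HereditaryConstraints n x) : Realization n x := by
  intro t ht i
  set P := zeroClass (x t) i
  have hx := (hfeas t ht).isPseudometric
  have hiP : i ∈ P := hx.mem_zeroClass_self i
  have hPt : #P ≤ t := (hfeas t ht).card_zeroClass_le i
  have hP : #P ∈ Icc 1 (n - 1) :=
    mem_Icc.2 ⟨card_pos.2 ⟨i, hiP⟩, hPt.trans (mem_Icc.1 ht).2⟩
  refine (hnest _ hP t ht hPt i).antisymm ?_
  have hsum := hher t ht P (mem_Icc.1 hP).2
  rw [hx.sum_sum_add_sum_sum_compl_zeroClass_eq_zero (hbin t ht) i, mul_zero] at hsum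
  exact (hfeas _ hP).isPseudometric.subset_zeroClass_of_sum_sum_nonpos hsum hiP

lemma Realization.hereditaryConstraints [DecidableEq V]
    (hbin : ∀ t ∈ Icc 1 (n - 1), ∀ i j : V, x t i j = 0 ∨ x t i j = 1)
    (hfeas : ∀ t ∈ Icc 1 (n - 1), LayerFeasible t (x t)) (hreal : Realization n x) :
    HereditaryConstraints n x := by
  intro t ht S hS
  rcases S.eq_empty_or_nonempty with rfl | hne
  · simp
  have hSn : #S ∈ Icc 1 (n - 1) := mem_Icc.2 ⟨hne.card_pos, hS⟩
  by_cases hclass : ∃ a ∈ S, S = zeroClass (x t) a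
  · obtain ⟨a, -, rfl⟩ := hclass
    rw [(hfeas _ hSn).isPseudometric.sum_sum_eq_zero_of_subset_zeroClass (hreal t ht a).ge,
      sum_sum_add_sum_sum_compl_eq_sum_card_symmDiff (hbin t ht)]
    positivity
  · push Not at hclass
    calc ∑ a ∈ S, ∑ b ∈ S, x #S a b ≤ #S * #S :=
          sum_sum_le_card_mul_card (fun a b => by rcases hbin _ hSn a b with h | h <;> simp [h]) S
      _ ≤ _ := by
          gcongr
          exact card_le_sum_sum_add_sum_sum_compl (hbin t ht) hclass

end Family

theorem statement6_general {V : Type*} [Fintype V] [DecidableEq V] (n : ℕ)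
    (x : ℕ → V → V → ℝ)
    (hbin : ∀ t ∈ Finset.Icc 1 (n - 1), ∀ i j : V, x t i j = 0 ∨ x t i j = 1)
    (hfeas : ∀ t ∈ Finset.Icc 1 (n - 1), LayerFeasible t (x t)) :
    ((∀ t ∈ Finset.Icc 1 (n - 2), ∀ i j : V, x (t + 1) i j ≤ x t i j) ∧
     (∀ t ∈ Finset.Icc 1 (n - 1), ∀ S : Finset V, S.card ≤ n - 1 →
       ∑ i ∈ S, ∑ j ∈ S, x S.card i j ≤
         (S.card : ℝ) * ((∑ i ∈ S, ∑ j ∈ S, x t i j) +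
           ∑ i ∈ S, ∑ j ∈ Sᶜ, (1 - x t i j))))
    ↔
    ((∀ s ∈ Finset.Icc 1 (n - 1), ∀ t ∈ Finset.Icc 1 (n - 1), s ≤ t →
        ∀ i : V, (Finset.univ.filter fun j : V => x s i j = 0) ⊆
          (Finset.univ.filter fun j : V => x t i j = 0)) ∧
     (∀ t ∈ Finset.Icc 1 (n - 1), ∀ i : V,
        (Finset.univ.filter fun j : V =>
            x ((Finset.univ.filter fun j : V => x t i j = 0).card) i j = 0) =
          (Finset.univ.filter fun j : V => x t i j = 0))) := by
  show LayerConstraints n x ∧ HereditaryConstraints n x ↔ NestedCliques n x ∧ Realization n x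
  constructor
  · rintro ⟨hlay, hher⟩
    have hnest := hlay.nestedCliques hfeas
    exact ⟨hnest, hher.realization hbin hfeas hnest⟩
  · rintro ⟨hnest, hreal⟩
    exact ⟨hnest.layerConstraints hbin, hreal.hereditaryConstraints hbin hfeas⟩

/-- For a family `(x^t)_{t=1}^{n-1}` of 0/1 solutions, each feasible for the layer-`t`
problem, with `𝒫_t` the partition of `V` into classes of `i ∼ j ↔ x^t i j = 0` (the class
of `i` being `{j : x^t i j = 0}`): the family satisfies the remaining constraints of
ILP-ultrametric (the layer constraints `x^t ≥ x^{t+1}` and the hereditary constraints)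
if and only if (Nested cliques) for `s ≤ t` every class of `𝒫_s` is contained in the
corresponding class of `𝒫_t`, and (Realization) every class `P` of `𝒫_t` with `|P| = s`
is itself a class of `𝒫_s`. -/
theorem statement6 {V : Type*} [Fintype V] [DecidableEq V] (n : ℕ)
    (hn : Fintype.card V = n) (hn2 : 2 ≤ n)
    (x : ℕ → V → V → ℝ)
    (hbin : ∀ t ∈ Finset.Icc 1 (n - 1), ∀ i j : V, x t i j = 0 ∨ x t i j = 1)
    (hfeas : ∀ t ∈ Finset.Icc 1 (n - 1), LayerFeasible t (x t)) :
    ((∀ t ∈ Finset.Icc 1 (n - 2), ∀ i j : V, x (t + 1) i j ≤ x t i j) ∧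
     (∀ t ∈ Finset.Icc 1 (n - 1), ∀ S : Finset V, S.card ≤ n - 1 →
       ∑ i ∈ S, ∑ j ∈ S, x S.card i j ≤
         (S.card : ℝ) * ((∑ i ∈ S, ∑ j ∈ S, x t i j) +
           ∑ i ∈ S, ∑ j ∈ Sᶜ, (1 - x t i j))))
    ↔
    ((∀ s ∈ Finset.Icc 1 (n - 1), ∀ t ∈ Finset.Icc 1 (n - 1), s ≤ t →
        ∀ i : V, (Finset.univ.filter fun j : V => x s i j = 0) ⊆
          (Finset.univ.filter fun j : V => x t i j = 0)) ∧
     (∀ t ∈ Finset.Icc 1 (n - 1), ∀ i : V,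
        (Finset.univ.filter fun j : V =>
            x ((Finset.univ.filter fun j : V => x t i j = 0).card) i j = 0) =
          (Finset.univ.filter fun j : V => x t i j = 0))) :=
  statement6_general n x hbin hfeas
end

section
/- Fix a finite set V with |V| = n and t ∈ {1, …, n−1}, and let x : V × V → {0,1} be symmetric with x(i,i) = 0 for all i and satisfying x(i,j) + x(j,k) ≥ x(i,k) for all i,j,k ∈ V. Then x satisfies the constraints Σ_{i,j ∈ S} x(i,j) ≥ 2 for every S ⊆ V with |S| = t + 1 if and only if x satisfies the constraints Σ_{j ∈ S} x(i,j) ≥ |S| − t for every S ⊆ V and every i ∈ S. -/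
/-! The zeros of row `i` of a 0/1 pseudometric form a set on which `x` vanishes entirely
(triangle inequality through `i`), so the `(t + 1)`-set constraints allow at most `t` of them,
and every other entry of the row contributes `1`. Conversely, on a `(t + 1)`-set each row sum
is at least `1`, so the total is at least `t + 1 ≥ 2`. -/

open Finset

theorem card_le_of_forall_card_eq_succ_sum_ne_zero {V M : Type*} [AddCommMonoid M]
    {x : V → V → M} {t : ℕ}
    (h : ∀ T : Finset V, #T = t + 1 → ∑ a ∈ T, ∑ b ∈ T, x a b ≠ 0)
    {Z : Finset V} (hZ : ∀ a ∈ Z, ∀ b ∈ Z, x a b = 0) : #Z ≤ t := by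
  by_contra! hlt
  obtain ⟨T, hTZ, hT⟩ := exists_subset_card_eq (Nat.succ_le_of_lt hlt)
  exact h T hT <| sum_eq_zero fun a ha => sum_eq_zero fun b hb => hZ a (hTZ ha) b (hTZ hb)

theorem eq_zero_of_row_eq_zero {V M : Type*} [AddCommMonoid M] [PartialOrder M]
    {x : V → V → M} (hnonneg : ∀ i j, 0 ≤ x i j) (hsymm : ∀ i j, x i j = x j i)
    (htri : ∀ i j k, x i k ≤ x i j + x j k) {i a b : V} (ha : x i a = 0) (hb : x i b = 0) :
    x a b = 0 :=
  le_antisymm (by simpa [hsymm a i, ha, hb] using htri a i b) (hnonneg a b)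

theorem card_eq_card_filter_eq_zero_add_sum {V R : Type*} [AddCommMonoidWithOne R]
    [DecidableEq R] {f : V → R} (hf : ∀ j, f j = 0 ∨ f j = 1) (S : Finset V) :
    (#S : R) = #(S.filter (f · = 0)) + ∑ j ∈ S, f j := by
  have hone : ∀ j ∈ S.filter (¬ f · = 0), f j = 1 := fun j hj =>
    (hf j).resolve_left (mem_filter.mp hj).2
  rw [← sum_filter_add_sum_filter_not S (f · = 0),
    sum_eq_zero fun j hj => (mem_filter.mp hj).2, sum_congr rfl hone,
    ← card_filter_add_card_filter_not (f · = 0)]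
  simp

theorem statement7_general {V : Type*} (t : ℕ)
    (ht1 : 1 ≤ t)
    (x : V → V → ℝ) (hbin : ∀ i j : V, x i j = 0 ∨ x i j = 1)
    (hsymm : ∀ i j : V, x i j = x j i)
    (htri : ∀ i j k : V, x i k ≤ x i j + x j k) :
    (∀ S : Finset V, S.card = t + 1 → (2 : ℝ) ≤ ∑ i ∈ S, ∑ j ∈ S, x i j) ↔
      (∀ S : Finset V, ∀ i ∈ S, (S.card : ℝ) - t ≤ ∑ j ∈ S, x i j) := by
  have hnonneg : ∀ i j, 0 ≤ x i j := fun i j => by rcases hbin i j with h | h <;> simp [h]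
  constructor
  · intro h S i _
    have hzeros : (#(S.filter (x i · = 0)) : ℝ) ≤ t := by
      exact_mod_cast card_le_of_forall_card_eq_succ_sum_ne_zero
        (fun T hT => (two_pos.trans_le (h T hT)).ne')
        fun a ha b hb => eq_zero_of_row_eq_zero hnonneg hsymm htri
          (mem_filter.mp ha).2 (mem_filter.mp hb).2
    linarith [card_eq_card_filter_eq_zero_add_sum (hbin i) S]
  · intro h S hS
    have hrow : ∀ i ∈ S, (1 : ℝ) ≤ ∑ j ∈ S, x i j := fun i hi => by
      simpa [hS] using h S i hi
    calc (2 : ℝ) ≤ t + 1 := by norm_cast; omega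
      _ = #S • (1 : ℝ) := by simp [hS]
      _ ≤ ∑ i ∈ S, ∑ j ∈ S, x i j := card_nsmul_le_sum S _ 1 hrow

/-- For a 0/1 symmetric function `x` with zero diagonal satisfying the triangle
constraints, the spreading constraints `Σ_{i,j ∈ S} x i j ≥ 2` over all `S ⊆ V` with
`|S| = t + 1` are equivalent to the constraints `Σ_{j ∈ S} x i j ≥ |S| - t` over all
`S ⊆ V` and `i ∈ S`. -/
theorem statement7 {V : Type*} [Fintype V] [DecidableEq V] (n t : ℕ)
    (hn : Fintype.card V = n) (ht1 : 1 ≤ t) (ht2 : t ≤ n - 1)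
    (x : V → V → ℝ) (hbin : ∀ i j : V, x i j = 0 ∨ x i j = 1)
    (hsymm : ∀ i j : V, x i j = x j i) (hdiag : ∀ i : V, x i i = 0)
    (htri : ∀ i j k : V, x i k ≤ x i j + x j k) :
    (∀ S : Finset V, S.card = t + 1 → (2 : ℝ) ≤ ∑ i ∈ S, ∑ j ∈ S, x i j) ↔
      (∀ S : Finset V, ∀ i ∈ S, (S.card : ℝ) - t ≤ ∑ j ∈ S, x i j) :=
  statement7_general t ht1 x hbin hsymm htri
end

section
/- For every ε ∈ (0,1) there exists a constant c(ε) > 0 such that the following holds. Let V be a finite set with |V| = n ≥ 2, let κ : V × V → ℝ be symmetric with κ ≥ 0, let t ∈ {1, …, n−1}, and let x : V × V → ℝ be symmetric with 0 ≤ x ≤ 1, x(i,i) = 0, x(i,j) + x(j,k) ≥ x(i,k) for all i,j,k ∈ V, and Σ_{j ∈ S} x(i,j) ≥ |S| − t for every S ⊆ V and every i ∈ S. Then there exists a partition of V into blocks each of size at most ⌊(1 + ε)t⌋ such that the total weight of crossing pairs satisfies Σ_{ {i,j} : i, j \text{ in different blocks} } κ(i,j) ≤ c(ε) · (log n) ·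 Σ_{ {i,j} ⊆ V, i ≠ j } κ(i,j) x(i,j). -/
/-!
Region growing in the style of Garg, Vazirani and Yannakakis. Let `E = Σ κ x` over ordered
pairs and give every ball the seed volume `E / n`. Around any remaining vertex `v` some radius
`ρ < r = ε / (1 + ε)` has boundary weight at most `C = log (n + 2) / r` times the volume of the
ball: otherwise the volume, whose derivative in `ρ` is the boundary weight and which only jumps up
when a vertex enters the ball, would grow by the factor `exp (C r) = n + 2` on `[0, r]`, yet it
never exceeds `E / n + E`. The spreading constraint applied to the ball itself gives
`|B| (1 - ρ) ≤ t`, i.e. `|B| ≤ (1 + ε) t`. Carving out such balls one after another and charging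
each boundary to the volume of its ball, which is disjoint from the energy left for the remaining
vertices, bounds the crossing weight by `C (E + n · E / n) = 2 C E`.
-/

open scoped Classical

open Finset

lemma Finset.monotoneOn_of_consecutive {α β : Type*} [LinearOrder α] [Preorder β]
    {T : Finset α} {g : α → β}
    (h : ∀ a ∈ T, ∀ b ∈ T, a < b → (∀ y ∈ T, y ∉ Set.Ioo a b) → g a ≤ g b) :
    MonotoneOn g T := by
  intro a ha b hb hab
  refine (T.finite_toSet.wellFoundedOn (r := (· < ·))).induction hb
    (P := fun b => a ≤ b → g a ≤ g b) (fun b hb ih hab => ?_) hab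
  rcases hab.eq_or_lt with rfl | hab
  · exact le_rfl
  set S := T.filter (· < b)
  have haS : a ∈ S := mem_filter.2 ⟨ha, hab⟩
  obtain ⟨hmT, hmb⟩ := mem_filter.1 (S.max'_mem ⟨a, haS⟩)
  refine (ih _ hmT hmb (S.le_max' a haS)).trans (h _ hmT b hb hmb fun y hy hy' => ?_)
  exact (S.le_max' y (mem_filter.2 ⟨hy, hy'.2⟩)).not_gt hy'.1

lemma Real.log_add_two_le_two_mul_log {y : ℝ} (hy : 2 ≤ y) :
    Real.log (y + 2) ≤ 2 * Real.log y := by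
  rw [two_mul, ← Real.log_mul (by linarith) (by linarith)]
  exact Real.log_le_log (by linarith) (by nlinarith)

namespace RegionGrowing

variable {V : Type*} (κ x : V → V → ℝ)

noncomputable def ball (A : Finset V) (v : V) (ρ : ℝ) : Finset V := A.filter fun u => x v u ≤ ρ

noncomputable def energy (A : Finset V) : ℝ := ∑ u ∈ A, ∑ w ∈ A, κ u w * x u w

noncomputable def boundary (B A : Finset V) : ℝ :=
  ∑ u ∈ A, ∑ w ∈ A, if (u ∈ B ↔ w ∈ B) then 0 else κ u w

/-- The part of the pair `u w` (of length `x u w`) lying within distance `ρ` of `v`; a pair with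
only `u` in the ball contributes `ρ - x v u`. -/
noncomputable def lengthInBall (v : V) (ρ : ℝ) (u w : V) : ℝ :=
  if x v u ≤ ρ then (if x v w ≤ ρ then x u w else ρ - x v u)
  else (if x v w ≤ ρ then ρ - x v w else 0)

noncomputable def volume (W₀ : ℝ) (A : Finset V) (v : V) (ρ : ℝ) : ℝ :=
  W₀ + ∑ u ∈ A, ∑ w ∈ A, κ u w * lengthInBall x v ρ u w

noncomputable def crossWeight [DecidableEq V] (P : Finset (Finset V)) (A : Finset V) : ℝ :=
  ∑ u ∈ A, ∑ w ∈ A, if ∃ B ∈ P, u ∈ B ∧ w ∈ B then 0 else κ u w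

variable {κ x}

lemma mem_ball {A : Finset V} {v u : V} {ρ : ℝ} : u ∈ ball x A v ρ ↔ u ∈ A ∧ x v u ≤ ρ :=
  mem_filter

lemma lengthInBall_nonneg (hx0 : ∀ i j, 0 ≤ x i j) (v u w : V) (ρ : ℝ) :
    0 ≤ lengthInBall x v ρ u w := by
  unfold lengthInBall; split_ifs <;> linarith [hx0 u w]

lemma lengthInBall_add_le (hxs : ∀ i j, x i j = x j i) (htri : ∀ i j k, x i k ≤ x i j + x j k)
    (v u w : V) (ρ : ℝ) :
    lengthInBall x v ρ u w + (if ρ < x v u ∧ ρ < x v w then x u w else 0) ≤ x u w := by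
  have := htri v u w; have := htri v w u
  unfold lengthInBall; split_ifs <;> linarith [hxs u w]

lemma lengthInBall_add_le_of_gap (hxs : ∀ i j, x i j = x j i) (hx0 : ∀ i j, 0 ≤ x i j)
    (htri : ∀ i j k, x i k ≤ x i j + x j k) {v u w : V} {ρ ρ' : ℝ} (hle : ρ ≤ ρ')
    (hu : x v u ∉ Set.Ioo ρ ρ') (hw : x v w ∉ Set.Ioo ρ ρ') :
    lengthInBall x v ρ u w + (ρ' - ρ) * (if (x v u ≤ ρ ↔ x v w ≤ ρ) then 0 else 1)
      ≤ lengthInBall x v ρ' u w := by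
  have := htri v u w; have := htri v w u; have := hx0 u w; have := hxs u w
  simp only [Set.mem_Ioo, not_and_or, not_lt] at hu hw
  unfold lengthInBall
  by_cases hu' : x v u ≤ ρ <;> by_cases hw' : x v w ≤ ρ <;>
    simp only [hu', hw', iff_true, iff_false, not_true, if_true, if_false] <;>
    split_ifs <;> rcases hu with hu | hu <;> rcases hw with hw | hw <;> linarith

lemma energy_nonneg (hκ0 : ∀ i j, 0 ≤ κ i j) (hx0 : ∀ i j, 0 ≤ x i j) (A : Finset V) :
    0 ≤ energy κ x A :=
  sum_nonneg fun u _ => sum_nonneg fun w _ => mul_nonneg (hκ0 u w) (hx0 u w)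

lemma energy_mono (hκ0 : ∀ i j, 0 ≤ κ i j) (hx0 : ∀ i j, 0 ≤ x i j) {A A' : Finset V}
    (h : A ⊆ A') : energy κ x A ≤ energy κ x A' := by
  have hnn : ∀ u w, 0 ≤ κ u w * x u w := fun u w => mul_nonneg (hκ0 u w) (hx0 u w)
  calc energy κ x A ≤ ∑ u ∈ A, ∑ w ∈ A', κ u w * x u w :=
        sum_le_sum fun u _ => sum_le_sum_of_subset_of_nonneg h fun w _ _ => hnn u w
    _ ≤ energy κ x A' :=
        sum_le_sum_of_subset_of_nonneg h fun u _ _ => sum_nonneg fun w _ => hnn u w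

lemma sum_sum_sdiff [DecidableEq V] (f : V → V → ℝ) (A B : Finset V) :
    ∑ u ∈ A \ B, ∑ w ∈ A \ B, f u w = ∑ u ∈ A, ∑ w ∈ A, if u ∉ B ∧ w ∉ B then f u w else 0 := by
  simp only [sdiff_eq_filter, sum_filter, ite_and]
  exact sum_congr rfl fun u _ => by split_ifs <;> simp

lemma volume_add_energy_le [DecidableEq V] (hκ0 : ∀ i j, 0 ≤ κ i j) (hxs : ∀ i j, x i j = x j i)
    (htri : ∀ i j k, x i k ≤ x i j + x j k) (W₀ : ℝ) (A : Finset V) (v : V) (ρ : ℝ) :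
    volume κ x W₀ A v ρ + energy κ x (A \ ball x A v ρ) ≤ W₀ + energy κ x A := by
  rw [energy, sum_sum_sdiff, volume, energy, add_assoc, add_le_add_iff_left, ← sum_add_distrib]
  gcongr with u hu
  rw [← sum_add_distrib]
  gcongr with w hw
  have h := mul_le_mul_of_nonneg_left (lengthInBall_add_le hxs htri v u w ρ) (hκ0 u w)
  simp only [mem_ball, hu, hw, true_and, not_le]
  split_ifs at h ⊢ <;> linarith

lemma self_le_volume (hκ0 : ∀ i j, 0 ≤ κ i j) (hx0 : ∀ i j, 0 ≤ x i j) (W₀ : ℝ)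
    (A : Finset V) (v : V) (ρ : ℝ) : W₀ ≤ volume κ x W₀ A v ρ :=
  le_add_of_nonneg_right <| sum_nonneg fun u _ => sum_nonneg fun w _ =>
    mul_nonneg (hκ0 u w) (lengthInBall_nonneg hx0 v u w ρ)

lemma volume_add_boundary_le (hκ0 : ∀ i j, 0 ≤ κ i j) (hxs : ∀ i j, x i j = x j i)
    (hx0 : ∀ i j, 0 ≤ x i j) (htri : ∀ i j k, x i k ≤ x i j + x j k) (W₀ : ℝ) (A : Finset V)
    (v : V) {ρ ρ' : ℝ} (hle : ρ ≤ ρ') (hgap : ∀ w ∈ A, x v w ∉ Set.Ioo ρ ρ') :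
    volume κ x W₀ A v ρ + (ρ' - ρ) * boundary κ (ball x A v ρ) A ≤ volume κ x W₀ A v ρ' := by
  rw [volume, volume, boundary, add_assoc, add_le_add_iff_left, mul_sum, ← sum_add_distrib]
  gcongr with u hu
  rw [mul_sum, ← sum_add_distrib]
  gcongr with w hw
  have h := mul_le_mul_of_nonneg_left
    (lengthInBall_add_le_of_gap hxs hx0 htri hle (hgap u hu) (hgap w hw)) (hκ0 u w)
  simp only [mem_ball, hu, hw, true_and]
  split_ifs at h ⊢ <;> linarith

lemma ball_eq_of_gap {A : Finset V} {v : V} {ρ ρ' σ : ℝ} (hσ : σ ∈ Set.Ico ρ ρ')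
    (hgap : ∀ w ∈ A, x v w ∉ Set.Ioo ρ ρ') : ball x A v σ = ball x A v ρ := by
  ext w
  simp only [mem_ball, and_congr_right_iff]
  intro hw
  have := hgap w hw
  obtain ⟨hρσ, hσρ'⟩ := hσ
  simp only [Set.mem_Ioo, not_and, not_lt] at this
  constructor <;> intro h
  · by_contra h'; linarith [this (lt_of_not_ge h')]
  · linarith

lemma volume_mul_exp_le (hκ0 : ∀ i j, 0 ≤ κ i j) (hxs : ∀ i j, x i j = x j i)
    (hx0 : ∀ i j, 0 ≤ x i j) (htri : ∀ i j k, x i k ≤ x i j + x j k) {W₀ C : ℝ} (hW : 0 < W₀)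
    (hC : 0 < C) {A : Finset V} {v : V} {ρ ρ' : ℝ} (hlt : ρ < ρ')
    (hgap : ∀ w ∈ A, x v w ∉ Set.Ioo ρ ρ')
    (H : ∀ σ ∈ Set.Ico ρ ρ', C * volume κ x W₀ A v σ < boundary κ (ball x A v σ) A) :
    volume κ x W₀ A v ρ * Real.exp (C * (ρ' - ρ)) ≤ volume κ x W₀ A v ρ' := by
  set vρ := volume κ x W₀ A v ρ
  set c := boundary κ (ball x A v ρ) A
  have hlin : Set.Ico ρ ρ' ⊆ {σ | C * (vρ + (σ - ρ) * c) < c} := fun σ hσ => by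
    have hvol := volume_add_boundary_le hκ0 hxs hx0 htri W₀ A v hσ.1
      fun w hw h => hgap w hw ⟨h.1, h.2.trans hσ.2⟩
    have hcut := H σ hσ
    rw [ball_eq_of_gap hσ hgap] at hcut
    exact (mul_le_mul_of_nonneg_left hvol hC.le).trans_lt hcut
  -- the affine lower bound for the volume on `[ρ, ρ')` survives the passage to the limit `σ → ρ'`
  have key : C * (vρ + (ρ' - ρ) * c) ≤ c := by
    have hρ' : ρ' ∈ closure (Set.Ico ρ ρ') := by
      rw [closure_Ico hlt.ne]; exact Set.right_mem_Icc.2 hlt.le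
    exact closure_lt_subset_le (by fun_prop) (by fun_prop) (closure_mono hlin hρ')
  have hv : 0 < vρ := hW.trans_le (self_le_volume hκ0 hx0 W₀ A v ρ)
  have hc : C * vρ < c := by simpa using hlin (Set.left_mem_Ico.2 hlt)
  have hz : C * (ρ' - ρ) < 1 := by
    by_contra! h
    nlinarith [mul_le_mul_of_nonneg_left h (mul_pos hC hv |>.trans hc).le]
  calc vρ * Real.exp (C * (ρ' - ρ)) ≤ vρ * (1 / (1 - C * (ρ' - ρ))) := by
        gcongr
        exact Real.exp_bound_div_one_sub_of_interval (by nlinarith) hz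
    _ ≤ vρ + (ρ' - ρ) * c := by
        rw [mul_one_div, div_le_iff₀ (by linarith)]
        nlinarith [mul_nonneg (sub_nonneg.2 hlt.le) (sub_nonneg.2 key)]
    _ ≤ volume κ x W₀ A v ρ' := volume_add_boundary_le hκ0 hxs hx0 htri W₀ A v hlt.le hgap

lemma exists_boundary_le_of_lt_exp (hκ0 : ∀ i j, 0 ≤ κ i j) (hxs : ∀ i j, x i j = x j i)
    (hx0 : ∀ i j, 0 ≤ x i j) (htri : ∀ i j k, x i k ≤ x i j + x j k) {W₀ C r : ℝ}
    (hW : 0 < W₀) (hC : 0 < C) (hr : 0 < r) (A : Finset V) (v : V)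
    (hgrow : W₀ + energy κ x A < W₀ * Real.exp (C * r)) :
    ∃ ρ ∈ Set.Ico 0 r, boundary κ (ball x A v ρ) A ≤ C * volume κ x W₀ A v ρ := by
  classical
  by_contra! H
  set T := (insert 0 (insert r (A.image (x v)))).filter (· ∈ Set.Icc 0 r)
  have h0T : 0 ∈ T := mem_filter.2 ⟨mem_insert_self _ _, le_rfl, hr.le⟩
  have hrT : r ∈ T := mem_filter.2 ⟨mem_insert_of_mem (mem_insert_self _ _), hr.le, le_rfl⟩
  -- `volume · * exp (-C ·)` increases from each breakpoint `x v w` to the next one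
  have hmono : MonotoneOn (fun σ => volume κ x W₀ A v σ * Real.exp (-(C * σ))) T := by
    refine Finset.monotoneOn_of_consecutive fun a ha b hb hab hcons => ?_
    replace ha := (mem_filter.1 ha).2
    replace hb := (mem_filter.1 hb).2
    have hgap : ∀ w ∈ A, x v w ∉ Set.Ioo a b := fun w hw hwab =>
      hcons _ (mem_filter.2 ⟨mem_insert_of_mem (mem_insert_of_mem (mem_image_of_mem _ hw)),
        ha.1.trans hwab.1.le, hwab.2.le.trans hb.2⟩) hwab
    have hexp := volume_mul_exp_le hκ0 hxs hx0 htri hW hC hab hgap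
      fun σ hσ => H σ ⟨ha.1.trans hσ.1, hσ.2.trans_le hb.2⟩
    calc volume κ x W₀ A v a * Real.exp (-(C * a))
        = volume κ x W₀ A v a * Real.exp (C * (b - a)) * Real.exp (-(C * b)) := by
          rw [mul_assoc, ← Real.exp_add]; ring_nf
      _ ≤ volume κ x W₀ A v b * Real.exp (-(C * b)) := by gcongr
  have h0r : volume κ x W₀ A v 0 ≤ volume κ x W₀ A v r * Real.exp (-(C * r)) := by
    simpa using hmono h0T hrT hr.le
  have hvr := volume_add_energy_le hκ0 hxs htri W₀ A v r
  have := energy_nonneg hκ0 hx0 (A \ ball x A v r)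
  have := self_le_volume hκ0 hx0 W₀ A v 0
  rw [Real.exp_neg, ← div_eq_mul_inv, le_div_iff₀ (Real.exp_pos _)] at h0r
  nlinarith [Real.exp_pos (C * r)]

lemma boundary_ball_eq_zero (hκ0 : ∀ i j, 0 ≤ κ i j) (hxs : ∀ i j, x i j = x j i)
    (hx0 : ∀ i j, 0 ≤ x i j) (htri : ∀ i j k, x i k ≤ x i j + x j k) {A : Finset V}
    (hE : energy κ x A = 0) (v : V) (ρ : ℝ) : boundary κ (ball x A v ρ) A = 0 := by
  have hterm : ∀ u ∈ A, ∀ w ∈ A, κ u w * x u w = 0 := fun u hu w hw =>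
    (sum_eq_zero_iff_of_nonneg fun w _ => mul_nonneg (hκ0 u w) (hx0 u w)).1
      ((sum_eq_zero_iff_of_nonneg fun u _ =>
        sum_nonneg fun w _ => mul_nonneg (hκ0 u w) (hx0 u w)).1 hE u hu) w hw
  refine sum_eq_zero fun u hu => sum_eq_zero fun w hw => ?_
  rw [ite_eq_left_iff]
  intro hne
  by_contra hκ
  have hx : x u w = 0 := (mul_eq_zero.1 (hterm u hu w hw)).resolve_left hκ
  have := htri v u w; have := htri v w u
  apply hne
  simp only [mem_ball, hu, hw, true_and]
  constructor <;> intro <;> linarith [hxs w u]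

lemma exists_radius_boundary_le (hκ0 : ∀ i j, 0 ≤ κ i j) (hxs : ∀ i j, x i j = x j i)
    (hx0 : ∀ i j, 0 ≤ x i j) (htri : ∀ i j k, x i k ≤ x i j + x j k) {n : ℕ} (hn : 0 < n)
    {E r : ℝ} (hr : 0 < r) (A : Finset V) (v : V) (hAE : energy κ x A ≤ E) :
    ∃ ρ ∈ Set.Ico 0 r,
      boundary κ (ball x A v ρ) A ≤ Real.log (n + 2) / r * volume κ x (E / n) A v ρ := by
  have hn' : (0 : ℝ) < n := Nat.cast_pos.2 hn
  have hC : 0 < Real.log (n + 2) / r := div_pos (Real.log_pos (by linarith)) hr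
  rcases (energy_nonneg hκ0 hx0 A).eq_or_lt with hA | hA
  · refine ⟨0, ⟨le_rfl, hr⟩, ?_⟩
    rw [boundary_ball_eq_zero hκ0 hxs hx0 htri hA.symm]
    have hW : 0 ≤ E / n := div_nonneg (hA.symm ▸ hAE) hn'.le
    exact mul_nonneg hC.le (hW.trans (self_le_volume hκ0 hx0 _ A v 0))
  · have hW : 0 < E / n := div_pos (hA.trans_le hAE) hn'
    refine exists_boundary_le_of_lt_exp hκ0 hxs hx0 htri hW hC hr A v ?_
    rw [div_mul_cancel₀ _ hr.ne', Real.exp_log (by linarith)]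
    have hE : E = n * (E / n) := (mul_div_cancel₀ E hn'.ne').symm
    nlinarith

lemma card_ball_le_floor {t ε ρ : ℝ} (hε : 0 < ε)
    (hspread : ∀ S : Finset V, ∀ i ∈ S, (#S : ℝ) - t ≤ ∑ j ∈ S, x i j) (hxd : ∀ i, x i i = 0)
    {A : Finset V} {v : V} (hv : v ∈ A) (hρ : ρ ∈ Set.Ico 0 (ε / (1 + ε))) :
    #(ball x A v ρ) ≤ ⌊(1 + ε) * t⌋₊ := by
  have hvB : v ∈ ball x A v ρ := mem_ball.2 ⟨hv, (hxd v).symm ▸ hρ.1⟩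
  have hsum : ∑ j ∈ ball x A v ρ, x v j ≤ #(ball x A v ρ) * ρ := by
    simpa using sum_le_card_nsmul _ _ ρ fun j hj => (mem_ball.1 hj).2
  have hspreadB := hspread _ v hvB
  have hρε : ρ * (1 + ε) < ε := (lt_div_iff₀ (by positivity)).1 hρ.2
  apply Nat.le_floor
  nlinarith [mul_le_mul_of_nonneg_left hρε.le (Nat.cast_nonneg (α := ℝ) #(ball x A v ρ))]

lemma crossWeight_insert_le [DecidableEq V] (hκ0 : ∀ i j, 0 ≤ κ i j) (Q : Finset (Finset V))
    (B A : Finset V) :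
    crossWeight κ (insert B Q) A ≤ boundary κ B A + crossWeight κ Q (A \ B) := by
  rw [crossWeight, crossWeight, sum_sum_sdiff, boundary, ← sum_add_distrib]
  gcongr with u hu
  rw [← sum_add_distrib]
  gcongr with w hw
  simp only [exists_mem_insert]
  by_cases hu : u ∈ B <;> by_cases hw : w ∈ B <;> simp [hu, hw] <;> split_ifs <;>
    linarith [hκ0 u w]

lemma exists_finpartition [DecidableEq V] (hκ0 : ∀ i j, 0 ≤ κ i j) (hxs : ∀ i j, x i j = x j i)
    (hxd : ∀ i, x i i = 0) (htri : ∀ i j k, x i k ≤ x i j + x j k) {W₀ C r : ℝ} {K : ℕ}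
    (hW : 0 ≤ W₀) (hC : 0 ≤ C)
    (hradius : ∀ (A : Finset V) (v : V), v ∈ A → ∃ ρ ∈ Set.Ico 0 r,
      boundary κ (ball x A v ρ) A ≤ C * volume κ x W₀ A v ρ)
    (hsize : ∀ (A : Finset V) (v : V) (ρ : ℝ), v ∈ A → ρ ∈ Set.Ico 0 r → #(ball x A v ρ) ≤ K)
    (A : Finset V) :
    ∃ P : Finpartition A, (∀ B ∈ P.parts, #B ≤ K) ∧
      crossWeight κ P.parts A ≤ C * (energy κ x A + #A * W₀) := by
  induction A using Finset.strongInduction with | H A ih =>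
  rcases A.eq_empty_or_nonempty with rfl | ⟨v, hv⟩
  · exact ⟨Finpartition.empty _, by simp, by simp [crossWeight, energy]⟩
  obtain ⟨ρ, hρ, hcut⟩ := hradius A v hv
  set B := ball x A v ρ
  have hBA : B ⊆ A := filter_subset _ _
  have hvB : v ∈ B := mem_ball.2 ⟨hv, (hxd v).symm ▸ hρ.1⟩
  obtain ⟨P, hPsize, hPcross⟩ := ih (A \ B) (sdiff_ssubset hBA ⟨v, hvB⟩)
  refine ⟨P.extend (nonempty_iff_ne_empty.1 ⟨v, hvB⟩) sdiff_disjoint (sdiff_sup_cancel hBA),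
    ?_, ?_⟩
  · simp only [Finpartition.extend_parts, forall_mem_insert]
    exact ⟨hsize A v ρ hv hρ, hPsize⟩
  have hvol := volume_add_energy_le hκ0 hxs htri W₀ A v ρ
  have hcard : (#(A \ B) : ℝ) + 1 ≤ #A := by
    exact_mod_cast card_lt_card (sdiff_ssubset hBA ⟨v, hvB⟩)
  calc crossWeight κ (insert B P.parts) A
      ≤ boundary κ B A + crossWeight κ P.parts (A \ B) := crossWeight_insert_le hκ0 _ B A
    _ ≤ C * volume κ x W₀ A v ρ + C * (energy κ x (A \ B) + #(A \ B) * W₀) :=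
        add_le_add hcut hPcross
    _ ≤ C * (energy κ x A + #A * W₀) := by
        rw [← mul_add]
        exact mul_le_mul_of_nonneg_left (by nlinarith) hC

end RegionGrowing

theorem statement11_general (ε : ℝ) (hε0 : 0 < ε) :
    ∃ c : ℝ, 0 < c ∧
      ∀ (V : Type) [Fintype V] [DecidableEq V], ∀ (n t : ℕ) (κ x : V → V → ℝ),
        Fintype.card V = n → 2 ≤ n → 1 ≤ t → t ≤ n - 1 →
        (∀ i j : V, κ i j = κ j i) → (∀ i j : V, 0 ≤ κ i j) →
        (∀ i j : V, x i j = x j i) →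
        (∀ i j : V, 0 ≤ x i j) → (∀ i j : V, x i j ≤ 1) →
        (∀ i : V, x i i = 0) →
        (∀ i j k : V, x i k ≤ x i j + x j k) →
        (∀ S : Finset V, ∀ i ∈ S, (S.card : ℝ) - t ≤ ∑ j ∈ S, x i j) →
        ∃ P : Finpartition (Finset.univ : Finset V),
          (∀ B ∈ P.parts, B.card ≤ ⌊(1 + ε) * (t : ℝ)⌋₊) ∧
          (1 / 2) * (∑ i : V, ∑ j : V,
              if ∃ B ∈ P.parts, i ∈ B ∧ j ∈ B then 0 else κ i j) ≤
            c * Real.log n * ((1 / 2) * ∑ i : V, ∑ j : V, κ i j * x i j) := by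
  refine ⟨4 * (1 + ε) / ε, by positivity, ?_⟩
  intro V _ _ n t κ x hcard hn _ _ _ hκ0 hxs hx0 _ hxd htri hspread
  have hn0 : 0 < n := by omega
  have hr : 0 < ε / (1 + ε) := by positivity
  set E := RegionGrowing.energy κ x univ
  have hE : 0 ≤ E := RegionGrowing.energy_nonneg hκ0 hx0 univ
  obtain ⟨P, hPsize, hPcross⟩ := RegionGrowing.exists_finpartition hκ0 hxs hxd htri
    (W₀ := E / n) (C := Real.log (n + 2) / (ε / (1 + ε))) (by positivity)
    (div_nonneg (Real.log_nonneg (by linarith)) hr.le)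
    (fun A v _ => RegionGrowing.exists_radius_boundary_le hκ0 hxs hx0 htri hn0 hr A v
      (RegionGrowing.energy_mono hκ0 hx0 (subset_univ A)))
    (fun A v ρ hv hρ => RegionGrowing.card_ball_le_floor hε0 hspread hxd hv hρ) univ
  refine ⟨P, hPsize, ?_⟩
  rw [card_univ, hcard, mul_div_cancel₀ _ (by positivity)] at hPcross
  have hlog := Real.log_add_two_le_two_mul_log (y := n) (by exact_mod_cast hn)
  calc (1 / 2) * RegionGrowing.crossWeight κ P.parts univ
      ≤ (1 / 2) * (Real.log (n + 2) / (ε / (1 + ε)) * (E + E)) := by gcongr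
    _ = Real.log (n + 2) * ((1 + ε) / ε) * E := by field_simp; ring
    _ ≤ 2 * Real.log n * ((1 + ε) / ε) * E := by gcongr
    _ = 4 * (1 + ε) / ε * Real.log n * ((1 / 2) * E) := by ring

/-- Single-layer rounding theorem: for every `ε ∈ (0,1)` there is a constant `c(ε) > 0`
such that for every finite `V` with `|V| = n ≥ 2`, every symmetric nonnegative `κ`,
every `t ∈ {1,…,n-1}` and every layer-`t` spreading metric `x` (symmetric, `[0,1]`-valued,
zero diagonal, triangle inequality, spreading constraints), there is a partition of `V`
into blocks of size at most `⌊(1+ε)t⌋` whose total crossing weight is at most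
`c(ε) · log n` times `Σ_{{i,j}} κ i j · x i j`. -/
theorem statement11 (ε : ℝ) (hε0 : 0 < ε) (hε1 : ε < 1) :
    ∃ c : ℝ, 0 < c ∧
      ∀ (V : Type) [Fintype V] [DecidableEq V], ∀ (n t : ℕ) (κ x : V → V → ℝ),
        Fintype.card V = n → 2 ≤ n → 1 ≤ t → t ≤ n - 1 →
        (∀ i j : V, κ i j = κ j i) → (∀ i j : V, 0 ≤ κ i j) →
        (∀ i j : V, x i j = x j i) →
        (∀ i j : V, 0 ≤ x i j) → (∀ i j : V, x i j ≤ 1) →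
        (∀ i : V, x i i = 0) →
        (∀ i j k : V, x i k ≤ x i j + x j k) →
        (∀ S : Finset V, ∀ i ∈ S, (S.card : ℝ) - t ≤ ∑ j ∈ S, x i j) →
        ∃ P : Finpartition (Finset.univ : Finset V),
          (∀ B ∈ P.parts, B.card ≤ ⌊(1 + ε) * (t : ℝ)⌋₊) ∧
          (1 / 2) * (∑ i : V, ∑ j : V,
              if ∃ B ∈ P.parts, i ∈ B ∧ j ∈ B then 0 else κ i j) ≤
            c * Real.log n * ((1 / 2) * ∑ i : V, ∑ j : V, κ i j * x i j) :=
  statement11_general ε hε0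
end

section
/- Let f : ℝ≥0 → ℝ≥0 be strictly increasing with f(0) = 0, and let V be a finite set. An ultrametric d on V is the f-image of a non-trivial ultrametric on V (i.e., d(i,j) = f(d'(i,j)) for some non-trivial ultrametric d' on V) if and only if both of the following hold: (1) for every nonempty S ⊆ V there exist i, j ∈ S with d(i,j) ≥ f(|S| − 1); and (2) for every real t, every equivalence class S_t of the relation i ∼ j iff d(i,j) ≤ t satisfies max_{i,j ∈ S_t} d(i,j) ≤ f(|S_t| − 1). -/
section Aux

set_option linter.unusedSectionVars false

variable {V : Type*} [Fintype V] [DecidableEq V]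

open Classical in
/-- The closed ball of radius `t` around `i`. -/
noncomputable def umBall (d : V → V → ℝ) (i : V) (t : ℝ) : Finset V :=
  Finset.univ.filter fun k => d i k ≤ t

open Classical in
lemma mem_umBall {d : V → V → ℝ} {i k : V} {t : ℝ} :
    k ∈ umBall d i t ↔ d i k ≤ t := by
  simp [umBall]

lemma umBall_mono {d : V → V → ℝ} {i : V} {t t' : ℝ} (h : t ≤ t') :
    umBall d i t ⊆ umBall d i t' := by
  intro k hk
  rw [mem_umBall] at hk ⊢
  exact hk.trans h

lemma umBall_congr {d : V → V → ℝ} (hd : IsUltrametric d) {i j : V} {t : ℝ}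
    (h : d i j ≤ t) : umBall d i t = umBall d j t := by
  obtain ⟨hnn, heq, hsymm, htri⟩ := hd
  ext k
  rw [mem_umBall, mem_umBall]
  constructor
  · intro hk
    calc d j k ≤ max (d k i) (d i j) := htri j k i
      _ ≤ t := by rw [hsymm k i]; exact max_le hk h
  · intro hk
    calc d i k ≤ max (d k j) (d j i) := htri i k j
      _ ≤ t := by rw [hsymm k j, hsymm j i]; exact max_le hk h

/-- Each ball (with its radius equal to the distance defining it) is an equivalence
class for the relation `d a b ≤ d i j`. -/
lemma umBall_class {d : V → V → ℝ} (hd : IsUltrametric d) (i j : V) :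
    ∀ a ∈ umBall d i (d i j), ∀ b : V, b ∈ umBall d i (d i j) ↔ d a b ≤ d i j := by
  obtain ⟨hnn, heq, hsymm, htri⟩ := hd
  intro a ha b
  rw [mem_umBall] at ha ⊢
  constructor
  · intro hb
    calc d a b ≤ max (d b i) (d i a) := htri a b i
      _ ≤ d i j := by rw [hsymm b i]; exact max_le hb ha
  · intro hab
    calc d i b ≤ max (d b a) (d a i) := htri i b a
      _ ≤ d i j := by rw [hsymm b a, hsymm a i]; exact max_le hab ha

end Aux

/-- Characterization of `f`-images of non-trivial ultrametrics: for `f : ℝ≥0 → ℝ≥0`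
strictly increasing with `f 0 = 0`, an ultrametric `d` on a finite set `V` is the
`f`-image of a non-trivial ultrametric on `V` iff (1) every nonempty `S ⊆ V` contains
points `i, j` with `d i j ≥ f (|S| - 1)`, and (2) for every real `t`, every equivalence
class `S` of `i ∼ j ↔ d i j ≤ t` satisfies `d i j ≤ f (|S| - 1)` for all `i, j ∈ S`. -/
theorem statement14 {V : Type*} [Fintype V] [DecidableEq V]
    (f : ℝ → ℝ) (hf0 : f 0 = 0) (hfnn : ∀ a : ℝ, 0 ≤ a → 0 ≤ f a)
    (hfmono : ∀ a b : ℝ, 0 ≤ a → a < b → f a < f b)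
    (d : V → V → ℝ) (hd : IsUltrametric d) :
    (∃ d' : V → V → ℝ, IsNontrivialUltrametric d' ∧ ∀ i j : V, d i j = f (d' i j)) ↔
    ((∀ S : Finset V, S.Nonempty → ∃ i ∈ S, ∃ j ∈ S, f ((S.card : ℝ) - 1) ≤ d i j) ∧
     (∀ t : ℝ, ∀ S : Finset V, S.Nonempty →
       (∀ i ∈ S, ∀ j : V, j ∈ S ↔ d i j ≤ t) →
       ∀ i ∈ S, ∀ j ∈ S, d i j ≤ f ((S.card : ℝ) - 1))) := by
  have hmono' : ∀ a b : ℝ, 0 ≤ a → a ≤ b → f a ≤ f b := by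
    intro a b ha hab
    rcases eq_or_lt_of_le hab with h | h
    · rw [h]
    · exact (hfmono a b ha h).le
  obtain ⟨hnn, heq, hsymm, htri⟩ := hd
  constructor
  · -- forward direction
    rintro ⟨d', ⟨⟨hnn', heq', hsymm', htri'⟩, h1', h2'⟩, hfd⟩
    constructor
    · intro S hS
      obtain ⟨i, hi, j, hj, hij⟩ := h1' S hS
      refine ⟨i, hi, j, hj, ?_⟩
      have hc : (0 : ℝ) ≤ (S.card : ℝ) - 1 := by
        have := Finset.card_pos.mpr hS
        have : (1 : ℝ) ≤ (S.card : ℝ) := by exact_mod_cast this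
        linarith
      rw [hfd i j]
      exact hmono' _ _ hc hij
    · intro t S hS hprop i hi j hj
      -- maximizing pair of d' on S × S
      obtain ⟨p₀, hp₀, hmax⟩ := Finset.exists_max_image (S ×ˢ S)
        (fun p => d' p.1 p.2) (hS.product hS)
      rw [Finset.mem_product] at hp₀
      obtain ⟨hi₀, hj₀⟩ := hp₀
      have hclass : ∀ a ∈ S, ∀ b : V, b ∈ S ↔ d' a b ≤ d' p₀.1 p₀.2 := by
        intro a ha b
        constructor
        · intro hb
          exact hmax (a, b) (Finset.mem_product.mpr ⟨ha, hb⟩)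
        · intro hab
          have : d a b ≤ d p₀.1 p₀.2 := by
            rw [hfd a b, hfd p₀.1 p₀.2]
            exact hmono' _ _ (hnn' a b) hab
          have hft : d p₀.1 p₀.2 ≤ t := (hprop p₀.1 hi₀ p₀.2).mp hj₀
          exact (hprop a ha b).mpr (this.trans hft)
      have := h2' (d' p₀.1 p₀.2) S hS hclass i hi j hj
      rw [hfd i j]
      exact hmono' _ _ (hnn' i j) this
  · -- backward direction
    rintro ⟨h1, h2⟩
    have hd' : IsUltrametric d := ⟨hnn, heq, hsymm, htri⟩
    set g : V → V → ℝ := fun i j => ((umBall d i (d i j)).card : ℝ) - 1 with hg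
    -- basic memberships
    have hmemself : ∀ i j : V, i ∈ umBall d i (d i j) := by
      intro i j
      rw [mem_umBall]
      have h0 : d i i = 0 := (heq i i).mpr rfl
      rw [h0]; exact hnn i j
    have hmemj : ∀ i j : V, j ∈ umBall d i (d i j) := fun i j => mem_umBall.mpr le_rfl
    -- the key identity:  d i j = f (g i j)
    have key : ∀ i j : V, d i j = f (g i j) := by
      intro i j
      set S := umBall d i (d i j) with hSdef
      have hSne : S.Nonempty := ⟨i, hmemself i j⟩
      have hcls := umBall_class hd' i j
      have hle : d i j ≤ f ((S.card : ℝ) - 1) :=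
        h2 (d i j) S hSne hcls i (hmemself i j) j (hmemj i j)
      have hge : f ((S.card : ℝ) - 1) ≤ d i j := by
        obtain ⟨a, ha, b, hb, hab⟩ := h1 S hSne
        exact hab.trans ((hcls a ha b).mp hb)
      exact le_antisymm hle hge
    -- symmetry of g
    have hgsymm : ∀ i j : V, g i j = g j i := by
      intro i j
      have : umBall d i (d i j) = umBall d j (d i j) := umBall_congr hd' le_rfl
      simp only [hg]
      rw [this, hsymm i j]
    -- monotonicity: d i k ≤ d i j → g i k ≤ g i j
    have hgmono : ∀ i j k : V, d i k ≤ d i j → g i k ≤ g i j := by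
      intro i j k h
      have := Finset.card_le_card (umBall_mono (d := d) (i := i) h)
      simp only [hg]
      have : ((umBall d i (d i k)).card : ℝ) ≤ ((umBall d i (d i j)).card : ℝ) := by
        exact_mod_cast this
      linarith
    -- nonnegativity of g
    have hgnn : ∀ i j : V, 0 ≤ g i j := by
      intro i j
      have : 1 ≤ (umBall d i (d i j)).card := Finset.card_pos.mpr ⟨i, hmemself i j⟩
      have : (1 : ℝ) ≤ ((umBall d i (d i j)).card : ℝ) := by exact_mod_cast this
      simp only [hg]
      linarith
    refine ⟨g, ⟨⟨hgnn, ?_, hgsymm, ?_⟩, ?_, ?_⟩, key⟩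
    · -- g i j = 0 ↔ i = j
      intro i j
      constructor
      · intro h
        have hcard : (umBall d i (d i j)).card = 1 := by
          have h1' : 1 ≤ (umBall d i (d i j)).card :=
            Finset.card_pos.mpr ⟨i, hmemself i j⟩
          have h2' : ((umBall d i (d i j)).card : ℝ) = 1 := by
            simp only [hg] at h; linarith
          exact_mod_cast h2'
        obtain ⟨x, hx⟩ := Finset.card_eq_one.mp hcard
        have hix : i = x := by
          have := hmemself i j; rw [hx, Finset.mem_singleton] at this; exact this
        have hjx : j = x := by
          have := hmemj i j; rw [hx, Finset.mem_singleton] at this; exact this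
        rw [hix, hjx]
      · intro h
        subst h
        have : umBall d i (d i i) = {i} := by
          ext k
          rw [mem_umBall, Finset.mem_singleton, (heq i i).mpr rfl]
          constructor
          · intro hk
            exact ((heq i k).mp (le_antisymm hk (hnn i k))).symm
          · rintro rfl
            exact ((heq _ _).mpr rfl).le
        simp only [hg, this, Finset.card_singleton]
        norm_num
    · -- strong triangle inequality for g
      intro i j k
      rcases le_max_iff.mp (htri i j k) with h | h
      · -- d i j ≤ d j k
        have hsub : umBall d i (d i j) ⊆ umBall d j (d j k) := by
          have e1 : umBall d i (d j k) = umBall d j (d j k) :=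
            umBall_congr hd' h
          rw [← e1]
          exact umBall_mono h
        have hc := Finset.card_le_card hsub
        have hc' : ((umBall d i (d i j)).card : ℝ) ≤ ((umBall d j (d j k)).card : ℝ) := by
          exact_mod_cast hc
        refine le_max_of_le_left ?_
        simp only [hg]
        linarith
      · -- d i j ≤ d k i
        have hsub : umBall d i (d i j) ⊆ umBall d k (d k i) := by
          have e1 : umBall d i (d k i) = umBall d k (d k i) :=
            umBall_congr hd' (hsymm i k).le
          rw [← e1]
          exact umBall_mono h
        have hc := Finset.card_le_card hsub
        have hc' : ((umBall d i (d i j)).card : ℝ) ≤ ((umBall d k (d k i)).card : ℝ) := by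
          exact_mod_cast hc
        refine le_max_of_le_right ?_
        simp only [hg]
        linarith
    · -- non-triviality condition (1) for g
      intro S hS
      obtain ⟨p₀, hp₀, hmax⟩ := Finset.exists_max_image (S ×ˢ S)
        (fun p => d p.1 p.2) (hS.product hS)
      rw [Finset.mem_product] at hp₀
      obtain ⟨hi₀, hj₀⟩ := hp₀
      refine ⟨p₀.1, hi₀, p₀.2, hj₀, ?_⟩
      have hsub : S ⊆ umBall d p₀.1 (d p₀.1 p₀.2) := by
        intro k hk
        rw [mem_umBall]
        exact hmax (p₀.1, k) (Finset.mem_product.mpr ⟨hi₀, hk⟩)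
      have hc := Finset.card_le_card hsub
      have hc' : ((S.card : ℝ)) ≤ ((umBall d p₀.1 (d p₀.1 p₀.2)).card : ℝ) := by
        exact_mod_cast hc
      simp only [hg]
      linarith
    · -- non-triviality condition (2) for g
      intro t S hS hprop i hi j hj
      have hsub : umBall d i (d i j) ⊆ S := by
        intro k hk
        rw [mem_umBall] at hk
        have hk' : g i k ≤ g i j := hgmono i j k hk
        have hjle : g i j ≤ t := (hprop i hi j).mp hj
        exact (hprop i hi k).mpr (hk'.trans hjle)
      have hc := Finset.card_le_card hsub
      have hc' : ((umBall d i (d i j)).card : ℝ) ≤ (S.card : ℝ) := by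
        exact_mod_cast hc
      simp only [hg]
      linarith
end
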